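/- Let K ⊂ ℝ be a nonempty compact set (d = 1) and let ψ be a feedforward neural network with depth L ∈ ℕ, widths w_i ∈ ℕ, in which all activation functions are equal to a single function σ ∈ C(ℝ). Then for every ε > 0 and every nonempty open interval I ⊂ ℝ there exists a function σ̃ ∈ C(ℝ) such that σ̃(s) = σ(s) for all s ∈ ℝ \ I, such that |σ(s) − σ̃(s)| < ε for all s ∈ ℝ, and such that the network ψ̃ obtained by replacing σ with σ̃ in every layer satisfies: the image Ψ̃(D) of its parameter-to-function map is dense in C(K). -/

import Mathlib

open scoped BigOperators ENNReal NNReal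

/-- Parameter space `D` of a feedforward network with `L` hidden layers and width
function `w` (`w 0 = d` is the input dimension, hidden layer `i` has width `w i` for
`i = 1, …, L`, and the output layer has width one). The component for `i : Fin L`
consists of the weight matrix `A_{i+1}` and the bias vector `b_{i+1}`; the last
component consists of the output weights `A_{L+1}` and the output bias `b_{L+1}`. -/
abbrev Params (w : ℕ → ℕ) (L : ℕ) : Type :=
  (∀ i : Fin L, ((Fin (w (i + 1)) → Fin (w i) → ℝ) × (Fin (w (i + 1)) → ℝ))) ×
    ((Fin (w L) → ℝ) × ℝ)

/-- The number of degrees of freedom `m = Σ_{i=1}^{L+1} w_i (w_{i-1} + 1)` of the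
network (with `w_{L+1} = 1`). -/
def mdim (w : ℕ → ℕ) (L : ℕ) : ℕ :=
  (∑ i ∈ Finset.range L, w (i + 1) * (w i + 1)) + (w L + 1)

/-- Output of the first `k` hidden layers of the network. -/
noncomputable def hiddenOut (σ : ℕ → ℝ → ℝ) (w : ℕ → ℕ) (L : ℕ)
    (θ : ∀ i : Fin L, ((Fin (w (i + 1)) → Fin (w i) → ℝ) × (Fin (w (i + 1)) → ℝ))) :
    ∀ k : ℕ, k ≤ L → (Fin (w 0) → ℝ) → Fin (w k) → ℝ
  | 0, _, x => x
  | k + 1, h, x => fun i =>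
      σ (k + 1)
        ((∑ j, (θ ⟨k, h⟩).1 i j * hiddenOut σ w L θ k (Nat.le_of_succ_le h) x j) +
          (θ ⟨k, h⟩).2 i)

/-- The scalar output `ψ(α, x)` of the feedforward network. -/
noncomputable def netFun (σ : ℕ → ℝ → ℝ) (w : ℕ → ℕ) (L : ℕ) (α : Params w L)
    (x : Fin (w 0) → ℝ) : ℝ :=
  (∑ j, α.2.1 j * hiddenOut σ w L α.1 L le_rfl x j) + α.2.2

lemma continuous_hiddenOut {σ : ℕ → ℝ → ℝ} {w : ℕ → ℕ} {L : ℕ}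
    (hσ : ∀ i, 1 ≤ i → i ≤ L → Continuous (σ i))
    (θ : ∀ i : Fin L, ((Fin (w (i + 1)) → Fin (w i) → ℝ) × (Fin (w (i + 1)) → ℝ))) :
    ∀ (k : ℕ) (h : k ≤ L), Continuous fun x => hiddenOut σ w L θ k h x := by
  intro k
  induction k with
  | zero =>
      intro h
      simp only [hiddenOut]
      exact continuous_id'
  | succ k ih =>
      intro h
      apply continuous_pi
      intro i
      simp only [hiddenOut]
      exact (hσ (k + 1) (Nat.succ_le_succ (Nat.zero_le _)) h).comp
        ((continuous_finset_sum _ fun j _ =>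
          continuous_const.mul ((continuous_apply j).comp (ih (Nat.le_of_succ_le h)))).add
          continuous_const)

lemma continuous_netFun {σ : ℕ → ℝ → ℝ} {w : ℕ → ℕ} {L : ℕ}
    (hσ : ∀ i, 1 ≤ i → i ≤ L → Continuous (σ i)) (α : Params w L) :
    Continuous fun x => netFun σ w L α x := by
  unfold netFun
  exact (continuous_finset_sum _ fun j _ =>
    continuous_const.mul
      ((continuous_apply j).comp (continuous_hiddenOut hσ α.1 L le_rfl))).add continuous_const

/-- The parameter-to-realization map `Ψ : D → C(K)`. -/
noncomputable def Psi (σ : ℕ → ℝ → ℝ) (w : ℕ → ℕ) (L : ℕ)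
    (hσ : ∀ i, 1 ≤ i → i ≤ L → Continuous (σ i)) (K : Set (Fin (w 0) → ℝ))
    (α : Params w L) : C(K, ℝ) :=
  ⟨fun x => netFun σ w L α x, (continuous_netFun hσ α).comp continuous_subtype_val⟩

/-- The affine function `z_{a,c} : x ↦ aᵀ x + c` as an element of `C(K)`. -/
noncomputable def affineCM {n : ℕ} (K : Set (Fin n → ℝ)) (a : Fin n → ℝ) (c : ℝ) :
    C(K, ℝ) :=
  ⟨fun x => (∑ j, a j * (x : Fin n → ℝ) j) + c,
    (continuous_finset_sum _ fun j _ =>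
      continuous_const.mul ((continuous_apply j).comp continuous_subtype_val)).add
      continuous_const⟩

/-- The constant function `z_c : x ↦ c` as an element of `C(K)`. -/
noncomputable def constCM {n : ℕ} (K : Set (Fin n → ℝ)) (c : ℝ) : C(K, ℝ) :=
  ⟨fun _ => c, continuous_const⟩

/-- A function `ℝ → ℝ` is nonpolynomial if it is not the restriction of a polynomial. -/
def IsNonpolynomial (σ : ℝ → ℝ) : Prop :=
  ¬ ∃ p : Polynomial ℝ, ∀ x : ℝ, σ x = p.eval x

/-- `𝓛` is Gâteaux differentiable in its first argument at `(v, y)` with partial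
derivative (identified with an element of `M(K) = C(K)*`) given by the continuous
linear functional `T`. -/
def HasGateauxDerivFirst {n : ℕ} {K : Set (Fin n → ℝ)}
    (𝓛 : C(K, ℝ) → C(K, ℝ) → ℝ) (v y : C(K, ℝ)) (T : C(K, ℝ) →L[ℝ] ℝ) : Prop :=
  ∀ h : C(K, ℝ), Filter.Tendsto (fun s : ℝ => (𝓛 (v + s • h) y - 𝓛 v y) / s)
    (nhdsWithin 0 (Set.Ioi 0)) (nhds (T h))

/-!
The activation is changed only on countably many pairwise disjoint small balls inside `(a, b)`.
On one of them it is replaced by an affine function of nonzero slope, on the others, up to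
affine changes of argument and value, by continuous extensions of the members of a dense
sequence in `C(K)`; continuity of `σ` at the centres lets all patches be chosen uniformly small
with summable sizes. A network with the new activation then realises every member of the dense
sequence: the lower layers pass the input on through the affine piece, and the top layer
evaluates the patched copy.
-/

open Function Metric Set

def HasAffineCopy (σ g : ℝ → ℝ) : Prop :=
  ∃ scale shift offset gain : ℝ, gain ≠ 0 ∧
    ∀ s ∈ Icc (-1 : ℝ) 1, σ (scale * s + shift) = offset + gain * g s

lemma exists_pairwise_disjoint_closedBall_subset_Ioo {a b : ℝ} (hab : a < b) :
    ∃ c r : ℕ → ℝ, (∀ n, 0 < r n) ∧ (∀ n, closedBall (c n) (r n) ⊆ Ioo a b) ∧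
      Pairwise (Disjoint on fun n => closedBall (c n) (r n)) := by
  set x : ℕ → ℝ := fun n => b - (b - a) / 2 ^ n
  have hgap : ∀ n, 0 < (b - a) / 2 ^ n := fun n => div_pos (sub_pos.2 hab) (by positivity)
  have hx_succ : ∀ n, x (n + 1) - x n = (b - a) / 2 ^ (n + 1) := fun n => by
    simp only [x, pow_succ]; field_simp; ring
  have hx_mono : Monotone x := monotone_nat_of_le_succ fun n => by
    linarith [hx_succ n, hgap (n + 1)]
  have hball : ∀ n, closedBall ((x n + x (n + 1)) / 2) ((x (n + 1) - x n) / 4) ⊆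
      Ioo (x n) (x (n + 1)) := fun n => by
    rw [Real.closedBall_eq_Icc]
    exact Icc_subset_Ioo (by linarith [hx_succ n, hgap (n + 1)])
      (by linarith [hx_succ n, hgap (n + 1)])
  refine ⟨fun n => (x n + x (n + 1)) / 2, fun n => (x (n + 1) - x n) / 4,
    fun n => by linarith [hx_succ n, hgap (n + 1)],
    fun n => (hball n).trans (Ioo_subset_Ioo ?_ ?_), fun m n hmn =>
      (hx_mono.pairwise_disjoint_on_Ioo_succ hmn).mono (hball m) (hball n)⟩
  · have : (b - a) / 2 ^ n ≤ b - a := div_le_self (sub_pos.2 hab).le (one_le_pow₀ one_le_two)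
    simp only [x]; linarith
  · simp only [x]; linarith [hgap (n + 1)]

/-- Each patch is blended in by an Urysohn function of its ball; summable errors make the sum
of the blends continuous. -/
lemma exists_continuous_patch {X ι : Type*} [MetricSpace X] {σ : X → ℝ} (hσ : Continuous σ)
    {U : Set X} {c : ι → X} {r γ : ι → ℝ} {C : ℝ} {g : ι → X → ℝ}
    (hr : ∀ i, 0 < r i) (hU : ∀ i, closedBall (c i) (r i) ⊆ U)
    (hdisj : Pairwise (Disjoint on fun i => closedBall (c i) (r i)))
    (hg : ∀ i, Continuous (g i)) (hγ : Summable γ) (hγC : ∀ i, γ i ≤ C) (hC : 0 ≤ C)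
    (hclose : ∀ i, ∀ t ∈ closedBall (c i) (r i), |g i t - σ t| ≤ γ i) :
    ∃ σt : X → ℝ, Continuous σt ∧ (∀ t ∉ U, σt t = σ t) ∧ (∀ t, |σ t - σt t| ≤ C) ∧
      ∀ i, ∀ t ∈ closedBall (c i) (r i / 2), σt t = g i t := by
  choose χ hχ0 hχ1 hχI using fun i => exists_continuous_zero_one_of_isClosed
    (isOpen_ball (x := c i) (ε := r i)).isClosed_compl isClosed_closedBall
    (disjoint_compl_left_iff_subset.2 (closedBall_subset_ball (half_lt_self (hr i))))
  set φ : ι → X → ℝ := fun i t => χ i t * (g i t - σ t) with hφ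
  have hφ_out : ∀ i t, t ∉ closedBall (c i) (r i) → φ i t = 0 := fun i t ht => by
    simp [hφ, hχ0 i fun h => ht (ball_subset_closedBall h)]
  have hφ_le : ∀ i t, |φ i t| ≤ γ i := fun i t => by
    by_cases ht : t ∈ closedBall (c i) (r i)
    · rw [hφ, abs_mul, abs_of_nonneg (hχI i t).1]
      exact (mul_le_of_le_one_left (abs_nonneg _) (hχI i t).2).trans (hclose i t ht)
    · rw [hφ_out i t ht, abs_zero]
      exact (abs_nonneg _).trans (hclose i (c i) (mem_closedBall_self (hr i).le))
  have hsum_of_mem : ∀ i t, t ∈ closedBall (c i) (r i) → ∑' j, φ j t = φ i t :=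
    fun i t ht => tsum_eq_single i fun j hj =>
      hφ_out j t fun ht' => disjoint_left.1 (hdisj hj) ht' ht
  have hsum_of_forall_notMem : ∀ t, (∀ i, t ∉ closedBall (c i) (r i)) → ∑' j, φ j t = 0 :=
    fun t ht => (tsum_congr fun j => hφ_out j t (ht j)).trans tsum_zero
  refine ⟨fun t => σ t + ∑' i, φ i t, hσ.add (continuous_tsum
    (fun i => (χ i).continuous.mul ((hg i).sub hσ)) hγ fun i t => hφ_le i t), ?_, ?_, ?_⟩
  · intro t ht
    dsimp only
    rw [hsum_of_forall_notMem t fun i hi => ht (hU i hi), add_zero]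
  · intro t
    rw [sub_add_cancel_left, abs_neg]
    by_cases ht : ∃ i, t ∈ closedBall (c i) (r i)
    · obtain ⟨i, hi⟩ := ht
      rw [hsum_of_mem i t hi]
      exact (hφ_le i t).trans (hγC i)
    · rw [hsum_of_forall_notMem t (not_exists.1 ht), abs_zero]
      exact hC
  · intro i t ht
    dsimp only
    rw [hsum_of_mem i t (closedBall_subset_closedBall (half_le_self (hr i).le) ht)]
    simp [hφ, hχ1 i ht]

lemma ContinuousAt.exists_affine_patch_close {σ f : ℝ → ℝ} {c γ r : ℝ} (hσ : ContinuousAt σ c)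
    (hf : Continuous f) (hγ : 0 < γ) (hr : 0 < r) :
    ∃ l, 0 < l ∧ 2 * l ≤ r ∧ ∃ δ ≠ 0,
      ∀ t ∈ closedBall c (2 * l), |σ c + δ * f ((t - c) / l) - σ t| ≤ γ := by
  obtain ⟨η, hη, hση⟩ := Metric.continuousAt_iff.1 hσ (γ / 2) (half_pos hγ)
  obtain ⟨M, hM⟩ := (isCompact_Icc (a := (-2 : ℝ)) (b := 2)).exists_bound_of_continuousOn
    hf.continuousOn
  set l := min (r / 2) (η / 4)
  have hl : 0 < l := lt_min (half_pos hr) (by positivity)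
  set δ := γ / (2 * (|M| + 1))
  have hδ : 0 < δ := by positivity
  refine ⟨l, hl, by linarith [min_le_left (r / 2) (η / 4)], δ, hδ.ne', fun t ht => ?_⟩
  rw [mem_closedBall, Real.dist_eq] at ht
  have hσt : |σ c - σ t| ≤ γ / 2 := by
    rw [← Real.dist_eq, dist_comm]
    exact (hση (by rw [Real.dist_eq]; linarith [min_le_right (r / 2) (η / 4)])).le
  have harg : (t - c) / l ∈ Icc (-2 : ℝ) 2 := by
    rw [mem_Icc, ← abs_le, abs_div, abs_of_pos hl, div_le_iff₀ hl]; exact ht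
  have hδf : |δ * f ((t - c) / l)| ≤ γ / 2 := by
    rw [abs_mul, abs_of_pos hδ]
    calc δ * |f ((t - c) / l)| ≤ δ * (|M| + 1) :=
          mul_le_mul_of_nonneg_left ((hM _ harg).trans ((le_abs_self M).trans
            (lt_add_one _).le)) hδ.le
      _ = γ / 2 := by simp only [δ]; field_simp
  calc |σ c + δ * f ((t - c) / l) - σ t| = |(σ c - σ t) + δ * f ((t - c) / l)| := by ring_nf
    _ ≤ γ / 2 + γ / 2 := (abs_add_le _ _).trans (add_le_add hσt hδf)
    _ = γ := add_halves γ

theorem exists_perturbation_forall_hasAffineCopy {ι : Type*} [Countable ι] {σ : ℝ → ℝ}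
    (hσ : Continuous σ) {f : ι → ℝ → ℝ} (hf : ∀ i, Continuous (f i)) {a b ε : ℝ}
    (hab : a < b) (hε : 0 < ε) :
    ∃ σt : ℝ → ℝ, Continuous σt ∧ (∀ s ∉ Ioo a b, σt s = σ s) ∧
      (∀ s, |σ s - σt s| < ε) ∧ ∀ i, HasAffineCopy σt (f i) := by
  obtain ⟨e, he⟩ := Countable.exists_injective_nat ι
  obtain ⟨c, r, hr, hsub, hdisj⟩ := exists_pairwise_disjoint_closedBall_subset_Ioo hab
  set γ : ι → ℝ := fun i => ε / 2 * (1 / 2) ^ e i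
  choose l hl hlr δ hδ hclose using fun i =>
    (hσ.continuousAt (x := c (e i))).exists_affine_patch_close (γ := γ i) (hf i)
      (by simp only [γ]; positivity) (hr (e i))
  obtain ⟨σt, hσt, hout, hnear, hpatch⟩ := exists_continuous_patch hσ (c := fun i => c (e i))
    (r := fun i => 2 * l i) (g := fun i t => σ (c (e i)) + δ i * f i ((t - c (e i)) / l i))
    (fun i => mul_pos two_pos (hl i))
    (fun i => (closedBall_subset_closedBall (hlr i)).trans (hsub _))
    (fun i j hij => (hdisj (he.ne hij)).mono (closedBall_subset_closedBall (hlr i))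
      (closedBall_subset_closedBall (hlr j)))
    (fun i => continuous_const.add (continuous_const.mul ((hf i).comp (by fun_prop))))
    ((summable_geometric_two.comp_injective he).mul_left (ε / 2))
    (fun i => mul_le_of_le_one_right (half_pos hε).le (pow_le_one₀ (by norm_num) (by norm_num)))
    (half_pos hε).le hclose
  refine ⟨σt, hσt, hout, fun s => (hnear s).trans_lt (half_lt_self hε),
    fun i => ⟨l i, c (e i), σ (c (e i)), δ i, hδ i, fun s hs => ?_⟩⟩
  have hmem : l i * s + c (e i) ∈ closedBall (c (e i)) (2 * l i / 2) := by
    rw [mem_closedBall, Real.dist_eq, add_sub_cancel_right, abs_mul, abs_of_pos (hl i)]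
    have := abs_le.2 hs
    nlinarith [hl i]
  rw [hpatch i _ hmem, add_sub_cancel_right, mul_div_cancel_left₀ _ (hl i).ne']

section Network

variable {w : ℕ → ℕ} {L : ℕ}

lemma sum_div_natCast_mul {n : ℕ} (hn : n ≠ 0) (ρ v : ℝ) : ∑ _j : Fin n, ρ / n * v = ρ * v := by
  simp only [Finset.sum_const, Finset.card_univ, Fintype.card_fin, nsmul_eq_mul]
  field_simp

lemma hiddenOut_succ_of_forall_eq {σ : ℕ → ℝ → ℝ}
    {θ : ∀ i : Fin L, ((Fin (w (i + 1)) → Fin (w i) → ℝ) × (Fin (w (i + 1)) → ℝ))}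
    {k : ℕ} (hk : k + 1 ≤ L) {ρ β : ℝ} (hθ : θ ⟨k, hk⟩ = (fun _ _ => ρ / w k, fun _ => β))
    (hwk : w k ≠ 0) {x : Fin (w 0) → ℝ} {v : ℝ}
    (hv : ∀ j, hiddenOut σ w L θ k (Nat.le_of_succ_le hk) x j = v) (i : Fin (w (k + 1))) :
    hiddenOut σ w L θ (k + 1) hk x i = σ (k + 1) (ρ * v + β) := by
  simp only [hiddenOut, hθ, hv, sum_div_natCast_mul hwk]

lemma netFun_of_forall_eq {σ : ℕ → ℝ → ℝ}
    {θ : ∀ i : Fin L, ((Fin (w (i + 1)) → Fin (w i) → ℝ) × (Fin (w (i + 1)) → ℝ))}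
    (hwL : w L ≠ 0) (ρ β : ℝ) {x : Fin (w 0) → ℝ} {v : ℝ}
    (hv : ∀ j, hiddenOut σ w L θ L le_rfl x j = v) :
    netFun σ w L (θ, (fun _ => ρ / w L, β)) x = ρ * v + β := by
  simp only [netFun, hv, sum_div_natCast_mul hwL]

theorem exists_netFun_eq_of_hasAffineCopy (hL : 0 < L) (hw0 : w 0 = 1)
    (hw : ∀ i, 1 ≤ i → i ≤ L → 0 < w i) (e : Fin (w 0)) {σ f : ℝ → ℝ}
    (hid : HasAffineCopy σ id) (hf : HasAffineCopy σ f) {R : ℝ} (hR : 0 < R) :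
    ∃ α : Params w L, ∀ x : Fin (w 0) → ℝ, |x e| ≤ R →
      netFun (fun _ => σ) w L α x = f (x e / R) := by
  obtain ⟨l₀, c₀, O₀, δ₀, hδ₀, hid⟩ := hid
  obtain ⟨l₁, c₁, O₁, δ₁, hδ₁, hf⟩ := hf
  obtain ⟨n, rfl⟩ : ∃ n, L = n + 1 := ⟨L - 1, by omega⟩
  have hw' : ∀ k ≤ n + 1, w k ≠ 0 := fun k hk => by
    rcases k with _ | k
    · omega
    · exact (hw _ (by omega) hk).ne'
  -- layer `k` reads its input as `p k + q k * (x e / R)`, and evaluates `σ` at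
  -- `sl k * (x e / R) + sh k`: on the copy of `id` below the top layer, on that of `f` at the top
  set p : ℕ → ℝ := fun k => if k = 0 then 0 else O₀
  set q : ℕ → ℝ := fun k => if k = 0 then R else δ₀
  have hq : ∀ k, q k ≠ 0 := fun k => by by_cases hk : k = 0 <;> simp [q, hk, hR.ne', hδ₀]
  set sl : ℕ → ℝ := fun k => if k = n then l₁ else l₀
  set sh : ℕ → ℝ := fun k => if k = n then c₁ else c₀
  let θ : ∀ i : Fin (n + 1), ((Fin (w (i + 1)) → Fin (w i) → ℝ) × (Fin (w (i + 1)) → ℝ)) :=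
    fun k => (fun _ _ => sl k / q k / w k, fun _ => sh k - sl k / q k * p k)
  have hxR : ∀ x : Fin (w 0) → ℝ, |x e| ≤ R → x e / R ∈ Icc (-1 : ℝ) 1 := fun x hx => by
    rw [mem_Icc, ← abs_le, abs_div, abs_of_pos hR, div_le_one hR]; exact hx
  have hstep : ∀ k (hk : k + 1 ≤ n + 1) (x : Fin (w 0) → ℝ),
      (∀ j, hiddenOut (fun _ => σ) w _ θ k (Nat.le_of_succ_le hk) x j = p k + q k * (x e / R)) →
      ∀ i, hiddenOut (fun _ => σ) w _ θ (k + 1) hk x i = σ (sl k * (x e / R) + sh k) := by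
    intro k hk x hin i
    rw [hiddenOut_succ_of_forall_eq hk rfl (hw' k (by omega)) hin]
    congr 1
    field_simp [hq k]
    ring
  have hlayer : ∀ k (hk : k + 1 ≤ n + 1) (x : Fin (w 0) → ℝ), |x e| ≤ R → ∀ i,
      hiddenOut (fun _ => σ) w _ θ (k + 1) hk x i = σ (sl k * (x e / R) + sh k) := by
    intro k
    induction k with
    | zero =>
      refine fun hk x _ => hstep 0 hk x fun j => ?_
      have : Subsingleton (Fin (w 0)) := by rw [hw0]; infer_instance
      simp [p, q, hiddenOut, Subsingleton.elim j e, mul_div_cancel₀ _ hR.ne']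
    | succ k ih =>
      refine fun hk x hx => hstep (k + 1) hk x fun j => ?_
      have hkn : k ≠ n := by omega
      simp only [ih (by omega) x hx j, sl, sh, p, q, if_neg hkn, hid _ (hxR x hx)]
      simp
  refine ⟨(θ, (fun _ => 1 / δ₁ / w (n + 1), -O₁ / δ₁)), fun x hx => ?_⟩
  rw [netFun_of_forall_eq (hw' _ le_rfl) _ _ (hlayer n le_rfl x hx)]
  simp only [sl, sh, if_pos rfl, hf _ (hxR x hx)]
  field_simp
  ring

end Network

theorem dense_image_by_activation_perturbation_general
    (w : ℕ → ℕ) (L : ℕ) (hL : 0 < L) (hw0 : w 0 = 1) (hw : ∀ i, 1 ≤ i → i ≤ L → 0 < w i)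
    (σ : ℝ → ℝ) (hσc : Continuous σ)
    (K : Set (Fin (w 0) → ℝ)) (hKc : IsCompact K)
    (ε : ℝ) (hε : 0 < ε) (a b : ℝ) (hab : a < b) :
    ∃ (σt : ℝ → ℝ) (hσt : Continuous σt),
      (∀ s : ℝ, s ∉ Set.Ioo a b → σt s = σ s) ∧
      (∀ s : ℝ, |σ s - σt s| < ε) ∧
      Dense (Set.range (Psi (fun _ => σt) w L (fun _ _ _ => hσt) K)) := by
  have : CompactSpace K := isCompact_iff_compactSpace.1 hKc
  have : Subsingleton (Fin (w 0)) := by rw [hw0]; infer_instance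
  let e : Fin (w 0) := ⟨0, by omega⟩
  obtain ⟨R, hR, hKR⟩ := hKc.isBounded.exists_pos_norm_le
  choose G hG using fun n => ContinuousMap.exists_restrict_eq hKc.isClosed
    (TopologicalSpace.denseSeq C(K, ℝ) n)
  let f : Option ℕ → ℝ → ℝ := fun o => o.elim id fun n s => G n fun _ => R * s
  have hf : ∀ o, Continuous (f o) := by
    rintro (_ | n) <;> simp only [f, Option.elim] <;> fun_prop
  obtain ⟨σt, hσt, hout, hnear, hcopy⟩ := exists_perturbation_forall_hasAffineCopy hσc hf hab hε
  refine ⟨σt, hσt, hout, hnear, (TopologicalSpace.denseRange_denseSeq _).mono ?_⟩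
  rintro _ ⟨n, rfl⟩
  obtain ⟨α, hα⟩ := exists_netFun_eq_of_hasAffineCopy hL hw0 hw e (hcopy none) (hcopy (some n)) hR
  refine ⟨α, ContinuousMap.ext fun x => ?_⟩
  have hx : |x.1 e| ≤ R := (norm_le_pi_norm x.1 e).trans (hKR x.1 x.2)
  have hconst : (fun _ => x.1 e) = x.1 := funext fun j => congrArg x.1 (Subsingleton.elim e j)
  simp [Psi, hα x.1 hx, f, mul_div_cancel₀ _ hR.ne', hconst, ← hG n]

/-- **Lemma 5.4.** For `d = 1` (i.e. `w 0 = 1`) and a network all of whose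
activation functions are equal to a single `σ ∈ C(ℝ)`: for every `ε > 0` and every
nonempty open interval `I = (a, b)` there exists `σ̃ ∈ C(ℝ)` that coincides with `σ`
outside of `I`, is uniformly `ε`-close to `σ`, and is such that the network obtained
by replacing `σ` with `σ̃` has an image `Ψ̃(D)` that is dense in `C(K)`. -/
theorem dense_image_by_activation_perturbation
    (w : ℕ → ℕ) (L : ℕ) (hL : 0 < L) (hw0 : w 0 = 1) (hw : ∀ i, 1 ≤ i → i ≤ L → 0 < w i)
    (σ : ℝ → ℝ) (hσc : Continuous σ)
    (K : Set (Fin (w 0) → ℝ)) (hKne : K.Nonempty) (hKc : IsCompact K)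
    (ε : ℝ) (hε : 0 < ε) (a b : ℝ) (hab : a < b) :
    ∃ (σt : ℝ → ℝ) (hσt : Continuous σt),
      (∀ s : ℝ, s ∉ Set.Ioo a b → σt s = σ s) ∧
      (∀ s : ℝ, |σ s - σt s| < ε) ∧
      Dense (Set.range (Psi (fun _ => σt) w L (fun _ _ _ => hσt) K)) :=
  dense_image_by_activation_perturbation_general w L hL hw0 hw σ hσc K hKc ε hε a b hab
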